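/- arXiv:1409.4156 — 7 statements merged into one kernel-verified Lean document; each statement's English description precedes it below -/
import Mathlib

section
/- Every truncation poset S decomposes as a disjoint union of sub-posets S_i, indexed by the elements i of S with |i| = 1, where S_i = { s ∈ S : i divides s }, and each S_i is isomorphic (via the norm function |−|) to an ordinary truncation set (a subset of ℕ closed under division, ordered by divisibility). -/
namespace TP

def IsTPNorm {S : Type*} [PartialOrder S] (ν : S → ℕ) : Prop :=
  (∀ s, 0 < ν s) ∧
  (∀ s t : S, s ≤ t → ν s ∣ ν t) ∧
  (∀ s t u : S, s ≤ t → t ≤ u → ν u / ν s = (ν u / ν t) * (ν t / ν s)) ∧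
  (∀ (s : S) (d : ℕ), d ∣ ν s → ∃! t : S, t ≤ s ∧ ν t = ν s / d) ∧
  (∀ s t t' : S, s ≤ t → s ≤ t' → ν t = ν t' → t = t')

def IsTPMap {S T : Type*} [PartialOrder S] [PartialOrder T] (νS : S → ℕ) (νT : T → ℕ)
    (f : S → T) : Prop :=
  ∀ s₁ s₂ : S, s₁ ≤ s₂ → f s₁ ≤ f s₂ ∧ νT (f s₂) / νT (f s₁) = νS s₂ / νS s₁

def IsFibration {S T : Type*} [PartialOrder S] [PartialOrder T] (f : S → T) : Prop :=
  ∀ (s : S) (t' : T), f s ≤ t' → ∃ s', s ≤ s' ∧ f s' = t'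

def IsTMap {S T : Type*} [PartialOrder S] [PartialOrder T] (νS : S → ℕ) (νT : T → ℕ)
    (f : S → T) : Prop :=
  IsTPMap νS νT f ∧ IsFibration f ∧ ∀ t : T, (f ⁻¹' {t}).Finite

def SameComp {S : Type*} [PartialOrder S] (ν : S → ℕ) (a b : S) : Prop :=
  ∃ i : S, ν i = 1 ∧ i ≤ a ∧ i ≤ b

def hatPreim {S T : Type*} [PartialOrder S] [PartialOrder T] (f : S → T) (t : T) : Set S :=
  {s | t ≤ f s ∧ ∀ s', s' ≤ s → t ≤ f s' → s' = s}

def IsNMap {S T : Type*} [PartialOrder S] [PartialOrder T] (νS : S → ℕ) (νT : T → ℕ)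
    (f : S → T) : Prop :=
  IsTPMap νS νT f ∧
  (∀ (s : S) (t' : T), SameComp νT (f s) t' → ∃ s', SameComp νS s s' ∧ t' ≤ f s') ∧
  ∀ t : T, (hatPreim f t).Finite

noncomputable def ghost {S : Type*} [PartialOrder S] (ν : S → ℕ) {k : Type*} [CommRing k]
    (a : S → k) : S → k :=
  fun s => ∑ᶠ t ∈ {t : S | t ≤ s}, (ν t : k) * a t ^ (ν s / ν t)

end TP

/-!
Below any `s` there is exactly one element of each norm dividing `|s|`, so the norm-one element
under `s` is unique and everything under `s` lies in the same component as `s`. Inside a component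
`S_i`, axiom (4) at `i` makes the norm injective, and `|s| ∣ |t|` yields an element `u ≤ t` of
norm `|s|` that lies in `S_i`, hence equals `s`.
-/

namespace TP.IsTPNorm

variable {S : Type*} [PartialOrder S] {ν : S → ℕ}

theorem dvd_of_le (hν : IsTPNorm ν) {s t : S} (h : s ≤ t) : ν s ∣ ν t :=
  hν.2.1 s t h

theorem exists_le_norm_eq (hν : IsTPNorm ν) {s : S} {d : ℕ} (hd : d ∣ ν s) :
    ∃ t ≤ s, ν t = d := by
  obtain ⟨t, ⟨hts, hνt⟩, -⟩ := hν.2.2.2.1 s (ν s / d) (Nat.div_dvd_of_dvd hd)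
  exact ⟨t, hts, by rwa [Nat.div_div_self hd (hν.1 s).ne'] at hνt⟩

theorem eq_of_le_of_le_of_norm_eq (hν : IsTPNorm ν) {s s' t : S} (hst : s ≤ t) (hs't : s' ≤ t)
    (h : ν s = ν s') : s = s' := by
  have hd : ν t / ν s ∣ ν t := Nat.div_dvd_of_dvd (hν.dvd_of_le hst)
  have hnorm : ν s = ν t / (ν t / ν s) := (Nat.div_div_self (hν.dvd_of_le hst) (hν.1 t).ne').symm
  exact (hν.2.2.2.1 t _ hd).unique ⟨hst, hnorm⟩ ⟨hs't, h ▸ hnorm⟩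

theorem injOn_norm_Ici (hν : IsTPNorm ν) (i : S) : Set.InjOn ν (Set.Ici i) :=
  fun s hs t ht h => hν.2.2.2.2 i s t hs ht h

theorem existsUnique_norm_eq_one_le (hν : IsTPNorm ν) (s : S) : ∃! i : S, ν i = 1 ∧ i ≤ s := by
  obtain ⟨i, his, hi⟩ := hν.exists_le_norm_eq (one_dvd (ν s))
  exact ⟨i, ⟨hi, his⟩, fun j ⟨hj, hjs⟩ => hν.eq_of_le_of_le_of_norm_eq hjs his (hj.trans hi.symm)⟩

theorem le_of_le_of_le_of_dvd (hν : IsTPNorm ν) {i t u : S} (hit : i ≤ t) (hut : u ≤ t)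
    (h : ν i ∣ ν u) : i ≤ u := by
  obtain ⟨j, hju, hj⟩ := hν.exists_le_norm_eq h
  rwa [hν.eq_of_le_of_le_of_norm_eq hit (hju.trans hut) hj.symm]

theorem le_iff_dvd_of_le_of_le (hν : IsTPNorm ν) {i s t : S} (his : i ≤ s) (hit : i ≤ t) :
    s ≤ t ↔ ν s ∣ ν t := by
  refine ⟨hν.dvd_of_le, fun h => ?_⟩
  obtain ⟨u, hut, hu⟩ := hν.exists_le_norm_eq h
  have hiu : i ≤ u := hν.le_of_le_of_le_of_dvd hit hut (hu ▸ hν.dvd_of_le his)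
  rwa [← hν.injOn_norm_Ici i hiu his hu]

end TP.IsTPNorm

/-- Every truncation poset decomposes as the disjoint union of the components
`S_i = {s | i ≤ s}` over the norm-1 elements `i`, and each component is isomorphic
via the norm to an ordinary truncation set (divisor-closed subset of ℕ, ordered by
divisibility). -/
theorem stmt0 {S : Type*} [PartialOrder S] (ν : S → ℕ) (hν : TP.IsTPNorm ν) :
    (∀ s : S, ∃! i : S, ν i = 1 ∧ i ≤ s) ∧
    ∀ i : S, ν i = 1 →
      Set.InjOn ν {s : S | i ≤ s} ∧
      (∀ s t : S, i ≤ s → i ≤ t → (s ≤ t ↔ ν s ∣ ν t)) ∧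
      (∀ s : S, i ≤ s → ∀ d : ℕ, 0 < d → d ∣ ν s → ∃ t : S, i ≤ t ∧ ν t = d) := by
  refine ⟨hν.existsUnique_norm_eq_one_le, fun i hi => ⟨hν.injOn_norm_Ici i,
    fun s t => hν.le_iff_dvd_of_le_of_le, fun s his d _ hds => ?_⟩⟩
  obtain ⟨t, hts, ht⟩ := hν.exists_le_norm_eq hds
  exact ⟨t, hν.le_of_le_of_le_of_dvd his hts (hi ▸ one_dvd _), ht⟩
end

section
/- Dwork's lemma for truncation posets: Let S be a truncation poset, k a commutative ring, and for each prime p let φ_p : k → k be a ring homomorphism with φ_p(a) ≡ a^p (mod p k) for all a ∈ k. Then a vector ⟨x_s⟩ ∈ k^S is in the image of the ghost map w : W_S(k) → k^S if and only if for every prime p and every s ∈ S with p dividing |s|, x_s ≡ φ_p(x_{s/p}) (mod p^{v_p(|s|)} k), where v_p denotes p-adic valuation and s/p is the unique element t | s with |t| = |s|/p. -/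
theorem natCast_dvd_of_forall_prime_pow_dvd {k : Type*} [CommRing k] {n : ℕ} (hn : n ≠ 0)
    {y : k} (h : ∀ p, p.Prime → p ∣ n → (p : k) ^ padicValNat p n ∣ y) : (n : k) ∣ y := by
  have hn' : (n : k) = ∏ p ∈ n.primeFactors, (p : k) ^ n.factorization p := by
    exact_mod_cast congrArg (Nat.cast (R := k)) (Nat.prod_primeFactors_pow_factorization hn)
  rw [hn']
  refine Finset.prod_dvd_of_coprime (fun p hp q hq hpq => ?_) (fun p hp => ?_)
  · have := (Nat.coprime_pow_primes (n.factorization p) (n.factorization q)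
      (Nat.prime_of_mem_primeFactors hp) (Nat.prime_of_mem_primeFactors hq) hpq).cast (R := k)
    simpa using this
  · have hp' := Nat.prime_of_mem_primeFactors hp
    rw [Nat.factorization_def n hp']
    exact h p hp' (Nat.dvd_of_mem_primeFactors hp)

theorem pow_padicValNat_succ_dvd_pow_sub_pow {k : Type*} [CommRing k] {p : ℕ}
    {b c : k} (h : (p : k) ∣ b - c) (q : ℕ) :
    (p : k) ^ (padicValNat p q + 1) ∣ b ^ q - c ^ q := by
  obtain rfl | hq := eq_or_ne q 0
  · simp
  obtain ⟨m, hm⟩ := pow_padicValNat_dvd (p := p) (n := q)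
  calc (p : k) ^ (padicValNat p q + 1) ∣ b ^ p ^ padicValNat p q - c ^ p ^ padicValNat p q :=
        dvd_sub_pow_of_dvd_sub h _
    _ ∣ (b ^ p ^ padicValNat p q) ^ m - (c ^ p ^ padicValNat p q) ^ m :=
        sub_dvd_pow_sub_pow _ _ m
    _ = b ^ q - c ^ q := by rw [← pow_mul, ← pow_mul, ← hm]

theorem pow_padicValNat_dvd_of_dvd_mul_of_not_dvd {p d m : ℕ} (hp : p.Prime)
    (hd : d ∣ p * m) (hdm : ¬ d ∣ m) : p ^ padicValNat p (p * m) ∣ d := by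
  have : Fact p.Prime := ⟨hp⟩
  have hm : m ≠ 0 := by rintro rfl; exact hdm (dvd_zero d)
  have hd0 : d ≠ 0 := by rintro rfl; exact mul_ne_zero hp.ne_zero hm (zero_dvd_iff.1 hd)
  rw [padicValNat_dvd_iff_le hd0]
  by_contra! hlt
  refine hdm ((Nat.dvd_iff_prime_pow_dvd_dvd m d).2 fun q j hq hqj => ?_)
  obtain rfl | hqp := eq_or_ne q p
  · rw [padicValNat.mul hp.ne_zero hm, padicValNat.self hp.one_lt] at hlt
    rw [padicValNat_dvd_iff_le hm]
    have := (padicValNat_dvd_iff_le hd0).1 hqj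
    omega
  · exact ((Nat.coprime_primes hq hp).2 hqp).pow_left j |>.dvd_of_dvd_mul_left (hqj.trans hd)

namespace TP

variable {S : Type*} [PartialOrder S] {ν : S → ℕ}

namespace IsTPNorm

variable (hν : IsTPNorm ν)
include hν

theorem pos (s : S) : 0 < ν s := hν.1 s

theorem norm_dvd_of_le {s t : S} (h : s ≤ t) : ν s ∣ ν t := hν.2.1 s t h

theorem existsUnique_le_norm_eq_div {s : S} {d : ℕ} (hd : d ∣ ν s) :
    ∃! t : S, t ≤ s ∧ ν t = ν s / d :=
  hν.2.2.2.1 s d hd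

theorem eq_of_le_of_le_of_norm_eq_s3 {s u u' : S} (hu : u ≤ s) (hu' : u' ≤ s)
    (h : ν u = ν u') : u = u' := by
  have hself : ν s / (ν s / ν u) = ν u :=
    Nat.div_div_self (hν.norm_dvd_of_le hu) (hν.pos s).ne'
  exact (hν.existsUnique_le_norm_eq_div (Nat.div_dvd_of_dvd (hν.norm_dvd_of_le hu))).unique
    ⟨hu, hself.symm⟩ ⟨hu', by rw [hself, h]⟩

theorem norm_lt_of_lt {u s : S} (h : u < s) : ν u < ν s :=
  (Nat.le_of_dvd (hν.pos s) (hν.norm_dvd_of_le h.le)).lt_of_ne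
    fun he => h.ne (hν.eq_of_le_of_le_of_norm_eq_s3 h.le le_rfl he)

theorem wellFounded_lt : WellFounded ((· < ·) : S → S → Prop) :=
  (measure ν).wf.mono fun _ _ => hν.norm_lt_of_lt

theorem le_iff_dvd {s u t : S} (hu : u ≤ s) (ht : t ≤ s) : u ≤ t ↔ ν u ∣ ν t := by
  refine ⟨hν.norm_dvd_of_le, fun hd => ?_⟩
  obtain ⟨u', hu't, hu'⟩ := (hν.existsUnique_le_norm_eq_div (Nat.div_dvd_of_dvd hd)).exists
  rw [Nat.div_div_self hd (hν.pos t).ne'] at hu'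
  rwa [← hν.eq_of_le_of_le_of_norm_eq_s3 (hu't.trans ht) hu hu']

theorem finite_setOf_le (s : S) : {u : S | u ≤ s}.Finite :=
  ((Nat.divisors (ν s)).finite_toSet.subset (by
    rintro _ ⟨u, hu, rfl⟩
    exact Nat.mem_divisors.2 ⟨hν.norm_dvd_of_le hu, (hν.pos s).ne'⟩)).of_finite_image
    fun _ hu _ hu' => hν.eq_of_le_of_le_of_norm_eq_s3 hu hu'

end IsTPNorm

variable {k : Type*} [CommRing k]

theorem ghost_eq_sum (hν : IsTPNorm ν) (a : S → k) (s : S) :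
    ghost ν a s = ∑ u ∈ (hν.finite_setOf_le s).toFinset, (ν u : k) * a u ^ (ν s / ν u) := by
  rw [ghost, ← finsum_mem_coe_finset, Set.Finite.coe_toFinset]

theorem ghost_congr {a b : S → k} {s : S} (h : ∀ u ≤ s, a u = b u) :
    ghost ν a s = ghost ν b s :=
  finsum_mem_congr rfl fun u hu => by rw [h u hu]

theorem ghost_eq_norm_mul_add_ghost_indicator_Iio (hν : IsTPNorm ν) (a : S → k) (s : S) :
    ghost ν a s = ν s * a s + ghost ν ((Set.Iio s).indicator a) s := by
  suffices ghost ν a s - ghost ν ((Set.Iio s).indicator a) s = ν s * a s by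
    linear_combination this
  rw [ghost_eq_sum hν, ghost_eq_sum hν, ← Finset.sum_sub_distrib,
    Finset.sum_eq_single_of_mem s (by simp)]
  · simp [Nat.div_self (hν.pos s)]
  · intro u hu hne
    simp [(lt_of_le_of_ne (by simpa using hu) hne : u < s)]

theorem ghost_indicator_Iio_of_lt {a : S → k} {s t : S} (hts : t < s) :
    ghost ν ((Set.Iio s).indicator a) t = ghost ν a t :=
  ghost_congr fun _ hu => Set.indicator_of_mem (Set.mem_Iio.2 (hu.trans_lt hts)) a

theorem pow_padicValNat_dvd_ghost_sub_map_ghost (hν : IsTPNorm ν) {p : ℕ} (hp : p.Prime)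
    {φ : k →+* k} (hφ : ∀ b, (p : k) ∣ φ b - b ^ p) (a : S → k) {s t : S} (hts : t ≤ s)
    (hst : ν s = p * ν t) :
    (p : k) ^ padicValNat p (ν s) ∣ ghost ν a s - φ (ghost ν a t) := by
  classical
  have : Fact p.Prime := ⟨hp⟩
  have hsub : (hν.finite_setOf_le t).toFinset ⊆ (hν.finite_setOf_le s).toFinset := by
    intro u; simpa using fun hut => hut.trans hts
  rw [ghost_eq_sum hν, ghost_eq_sum hν, map_sum, ← Finset.sum_sdiff hsub, add_sub_assoc,
    ← Finset.sum_sub_distrib]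
  refine dvd_add (Finset.dvd_sum fun u hu => ?_) (Finset.dvd_sum fun u hu => ?_)
  · obtain ⟨hus, hut⟩ : u ≤ s ∧ ¬ u ≤ t := by simpa using hu
    have hdvd := hν.norm_dvd_of_le hus
    rw [hst] at hdvd ⊢
    rw [← Nat.cast_pow]
    refine (Nat.cast_dvd_cast ?_).mul_right _
    exact pow_padicValNat_dvd_of_dvd_mul_of_not_dvd hp hdvd
      fun h => hut ((hν.le_iff_dvd hus hts).2 h)
  · obtain ⟨q, hq⟩ := hν.norm_dvd_of_le (by simpa using hu)
    have hu0 := (hν.pos u).ne'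
    have hq0 : q ≠ 0 := by rintro rfl; exact (hν.pos t).ne' (by simpa using hq)
    have hval : padicValNat p (ν s) = padicValNat p (ν u) + (padicValNat p q + 1) := by
      rw [hst, hq, padicValNat.mul hp.ne_zero (mul_ne_zero hu0 hq0), padicValNat.mul hu0 hq0,
        padicValNat.self hp.one_lt]
      ring
    have hs : ν s / ν u = p * q := by
      rw [hst, hq, mul_left_comm, Nat.mul_div_cancel_left _ (hν.pos u)]
    have ht : ν t / ν u = q := by rw [hq, Nat.mul_div_cancel_left _ (hν.pos u)]
    rw [hval, pow_add, hs, ht, map_mul, map_natCast, map_pow, ← mul_sub, pow_mul]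
    exact mul_dvd_mul (by rw [← Nat.cast_pow]; exact Nat.cast_dvd_cast pow_padicValNat_dvd)
      (pow_padicValNat_succ_dvd_pow_sub_pow (dvd_sub_comm.1 (hφ (a u))) q)

open Classical in
noncomputable def ghostPreimage (hν : IsTPNorm ν) (x : S → k) (s : S) : k :=
  Classical.epsilon fun c : k =>
    (ν s : k) * c = x s - ghost ν (fun u => if u < s then ghostPreimage hν x u else 0) s
termination_by ν s
decreasing_by exact hν.norm_lt_of_lt ‹_›

theorem ghostPreimage_eq (hν : IsTPNorm ν) (x : S → k) (s : S) :
    ghostPreimage hν x s = Classical.epsilon fun c : k =>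
      (ν s : k) * c = x s - ghost ν ((Set.Iio s).indicator (ghostPreimage hν x)) s := by
  rw [ghostPreimage]
  rfl

theorem ghost_ghostPreimage (hν : IsTPNorm ν) (x : S → k)
    (hx : ∀ (a : S → k) (s : S), (∀ t < s, ghost ν a t = x t) →
      (ν s : k) ∣ x s - ghost ν ((Set.Iio s).indicator a) s) :
    ghost ν (ghostPreimage hν x) = x := by
  funext s
  induction s using hν.wellFounded_lt.induction with
  | _ s ih =>
    obtain ⟨c, hc⟩ := hx _ s ih
    have hspec := Classical.epsilon_spec (p := fun c : k =>
      (ν s : k) * c = x s - ghost ν ((Set.Iio s).indicator (ghostPreimage hν x)) s) ⟨c, hc.symm⟩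
    rw [ghost_eq_norm_mul_add_ghost_indicator_Iio hν, ghostPreimage_eq hν x s, hspec]
    ring

theorem natCast_norm_dvd_sub_ghost_indicator_Iio (hν : IsTPNorm ν)
    {φ : ∀ p : ℕ, p.Prime → k →+* k}
    (hφ : ∀ (p : ℕ) (hp : p.Prime) (b : k), (p : k) ∣ φ p hp b - b ^ p) {x : S → k}
    (hx : ∀ (p : ℕ) (hp : p.Prime) (s t : S), p ∣ ν s → t ≤ s → ν t = ν s / p →
      (p : k) ^ padicValNat p (ν s) ∣ x s - φ p hp (x t))
    {a : S → k} {s : S} (ha : ∀ t < s, ghost ν a t = x t) :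
    (ν s : k) ∣ x s - ghost ν ((Set.Iio s).indicator a) s := by
  refine natCast_dvd_of_forall_prime_pow_dvd (hν.pos s).ne' fun p hp hps => ?_
  obtain ⟨t, hts, htn⟩ := (hν.existsUnique_le_norm_eq_div hps).exists
  have hlt : t < s :=
    hts.lt_of_ne (by rintro rfl; exact (Nat.div_lt_self (hν.pos t) hp.one_lt).ne' htn)
  have hxt : x t = ghost ν ((Set.Iio s).indicator a) t := by
    rw [ghost_indicator_Iio_of_lt hlt, ha t hlt]
  rw [← sub_sub_sub_cancel_right _ _ (φ p hp (x t))]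
  refine dvd_sub (hx p hp s t hps hts htn) ?_
  rw [hxt]
  exact pow_padicValNat_dvd_ghost_sub_map_ghost hν hp (hφ p hp) _ hts
    (by rw [htn, Nat.mul_div_cancel' hps])

end TP

/-- Dwork's lemma for truncation posets: given ring endomorphisms `φ_p` lifting
Frobenius mod `p`, a vector `x` is in the image of the ghost map iff
`x_s ≡ φ_p (x_{s/p}) mod p^{v_p(|s|)}` for all primes `p` dividing `|s|`. -/
theorem stmt3 {S : Type*} [PartialOrder S] (ν : S → ℕ) (hν : TP.IsTPNorm ν)
    {k : Type*} [CommRing k]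
    (φ : ∀ p : ℕ, p.Prime → k →+* k)
    (hφ : ∀ (p : ℕ) (hp : p.Prime) (a : k), φ p hp a - a ^ p ∈ Ideal.span {(p : k)})
    (x : S → k) :
    (∃ a : S → k, TP.ghost ν a = x) ↔
      ∀ (p : ℕ) (hp : p.Prime) (s t : S), p ∣ ν s → t ≤ s → ν t = ν s / p →
        x s - φ p hp (x t) ∈ Ideal.span {(p : k) ^ padicValNat p (ν s)} := by
  simp only [Ideal.mem_span_singleton] at hφ ⊢
  constructor
  · rintro ⟨a, rfl⟩ p hp s t hps hts htn
    exact TP.pow_padicValNat_dvd_ghost_sub_map_ghost hν hp (hφ p hp) a hts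
      (by rw [htn, Nat.mul_div_cancel' hps])
  · exact fun hx => ⟨_, TP.ghost_ghostPreimage hν x fun a s ha =>
      TP.natCast_norm_dvd_sub_ghost_indicator_Iio hν hφ hx ha⟩
end

section
/- Classical Dwork lemma: Let S ⊂ ℕ be a set closed under division, k a commutative ring, and for each prime p let φ_p : k → k be a ring homomorphism with φ_p(a) ≡ a^p (mod p k). Then ⟨x_s⟩ ∈ k^S is in the image of the ghost map (a_s) ↦ ⟨Σ_{d|s} d·a_d^{s/d}⟩ if and only if x_s ≡ φ_p(x_{s/p}) (mod p^{v_p(s)} k) for every prime p and every s ∈ S divisible by p. -/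
/-!
Write `g_s(a) = ∑_{d ∣ s} d a_d^{s/d}` for the ghost components. If `p ∣ s`, the summands of
`g_s(a)` indexed by divisors of `s/p` match those of `φ_p(g_{s/p}(a))` modulo `p^{v_p(s)}`,
because `a ≡ b (mod p)` implies `a^m ≡ b^m (mod p^{v_p(m)+1})`; every other divisor of `s` is
itself divisible by `p^{v_p(s)}`. This gives the congruences for ghost vectors. Conversely, given
the congruences, solve `x_s = g_s(a)` for `a_s` by induction on `s`: the remainder
`x_s - ∑_{d ∣ s, d < s} d a_d^{s/d}` equals
`x_s - φ_p(x_{s/p}) - (g_s(a) - φ_p(g_{s/p}(a))) + s a_s` by the induction hypothesis, so it is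
divisible by every `p^{v_p(s)}`, hence by `s`.
-/

namespace Dwork

variable {k : Type*} [CommRing k]

noncomputable def ghostComponent (a : ℕ → k) (s : ℕ) : k :=
  ∑ d ∈ s.divisors, (d : k) * a d ^ (s / d)

lemma ghostComponent_eq_sum_properDivisors_add (a : ℕ → k) {s : ℕ} (hs : s ≠ 0) :
    ghostComponent a s = ∑ d ∈ s.properDivisors, (d : k) * a d ^ (s / d) + s * a s := by
  rw [ghostComponent, ← Nat.cons_self_properDivisors hs, Finset.sum_cons, add_comm,
    Nat.div_self (Nat.pos_of_ne_zero hs), pow_one]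

lemma natCast_pow_padicValNat_dvd (p n : ℕ) : (p : k) ^ padicValNat p n ∣ n := by
  exact_mod_cast Nat.cast_dvd_cast (pow_padicValNat_dvd (p := p) (n := n))

lemma pow_padicValNat_succ_dvd_pow_sub_pow {p : ℕ} {a b : k} (h : (p : k) ∣ a - b) (m : ℕ) :
    (p : k) ^ (padicValNat p m + 1) ∣ a ^ m - b ^ m := by
  obtain ⟨m', hm'⟩ := pow_padicValNat_dvd (p := p) (n := m)
  calc (p : k) ^ (padicValNat p m + 1)
      ∣ a ^ p ^ padicValNat p m - b ^ p ^ padicValNat p m := dvd_sub_pow_of_dvd_sub h _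
    _ ∣ (a ^ p ^ padicValNat p m) ^ m' - (b ^ p ^ padicValNat p m) ^ m' :=
      sub_dvd_pow_sub_pow _ _ _
    _ = a ^ m - b ^ m := by rw [← pow_mul, ← pow_mul, ← hm']

lemma pow_padicValNat_dvd_of_not_dvd_div {p s d : ℕ} [hp : Fact p.Prime] (hs : s ≠ 0)
    (hd : d ∣ s) (hnd : ¬ d ∣ s / p) : p ^ padicValNat p s ∣ d := by
  obtain ⟨c, rfl⟩ := hd
  by_cases hpc : p ∣ c
  · obtain ⟨c', rfl⟩ := hpc
    refine absurd ⟨c', ?_⟩ hnd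
    rw [mul_left_comm, Nat.mul_div_cancel_left _ hp.out.pos]
  · rw [padicValNat.mul (left_ne_zero_of_mul hs) (right_ne_zero_of_mul hs),
      padicValNat.eq_zero_of_not_dvd hpc, add_zero]
    exact pow_padicValNat_dvd

lemma pow_padicValNat_dvd_mul_pow_sub_mul_pow {p e t : ℕ} [hp : Fact p.Prime] (ht : t ≠ 0)
    (he : e ∣ t) {b c : k} (hc : (p : k) ∣ c - b ^ p) :
    (p : k) ^ padicValNat p (p * t) ∣ e * b ^ (p * t / e) - e * c ^ (t / e) := by
  obtain ⟨m, rfl⟩ := he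
  have he0 : e ≠ 0 := left_ne_zero_of_mul ht
  have hm0 : m ≠ 0 := right_ne_zero_of_mul ht
  rw [mul_left_comm, Nat.mul_div_cancel_left _ (Nat.pos_of_ne_zero he0),
    Nat.mul_div_cancel_left _ (Nat.pos_of_ne_zero he0),
    padicValNat.mul he0 (mul_ne_zero hp.out.ne_zero hm0), padicValNat.mul hp.out.ne_zero hm0,
    padicValNat_self, pow_add, ← mul_sub, pow_mul, add_comm 1]
  exact mul_dvd_mul (natCast_pow_padicValNat_dvd p e)
    (pow_padicValNat_succ_dvd_pow_sub_pow (dvd_sub_comm.mp hc) m)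

theorem pow_padicValNat_dvd_ghostComponent_sub {p s : ℕ} [hp : Fact p.Prime] (hs : s ≠ 0)
    (hps : p ∣ s) (φ : k →+* k) (hφ : ∀ b, (p : k) ∣ φ b - b ^ p) (a : ℕ → k) :
    (p : k) ^ padicValNat p s ∣ ghostComponent a s - φ (ghostComponent a (s / p)) := by
  obtain ⟨t, rfl⟩ := hps
  rw [Nat.mul_div_cancel_left t hp.out.pos, ghostComponent,
    ← Finset.sum_filter_add_sum_filter_not _ (· ∣ t),
    Nat.divisors_filter_dvd_of_dvd hs (dvd_mul_left t p), ghostComponent, map_sum,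
    add_sub_right_comm, ← Finset.sum_sub_distrib]
  refine dvd_add (Finset.dvd_sum fun e he => ?_) (Finset.dvd_sum fun d hd => ?_)
  · rw [Nat.mem_divisors] at he
    simp only [map_mul, map_pow, map_natCast]
    exact pow_padicValNat_dvd_mul_pow_sub_mul_pow he.2 he.1 (hφ (a e))
  · rw [Finset.mem_filter, Nat.mem_divisors] at hd
    have hpd : p ^ padicValNat p (p * t) ∣ d := pow_padicValNat_dvd_of_not_dvd_div hs hd.1.1
      (by simpa only [Nat.mul_div_cancel_left t hp.out.pos] using hd.2)
    exact dvd_mul_of_dvd_left (by exact_mod_cast Nat.cast_dvd_cast (α := k) hpd) _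

lemma natCast_dvd_of_forall_prime_pow_dvd {n : ℕ} (hn : n ≠ 0) {y : k}
    (h : ∀ p : ℕ, p.Prime → p ∣ n → (p : k) ^ padicValNat p n ∣ y) : (n : k) ∣ y := by
  rw [Nat.prod_primeFactors_pow_factorization hn, Nat.cast_prod]
  refine Finset.prod_dvd_of_coprime (fun p hp q hq hpq => ?_) fun p hp => ?_
  · exact_mod_cast (Nat.coprime_pow_primes _ _ (Nat.prime_of_mem_primeFactors hp)
      (Nat.prime_of_mem_primeFactors hq) hpq).cast (R := k)
  · have hp' := Nat.prime_of_mem_primeFactors hp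
    rw [Nat.cast_pow, Nat.factorization_def n hp']
    exact h p hp' (Nat.dvd_of_mem_primeFactors hp)

-- Solves `x_n = g_n(a)` for `a_n` given the earlier values, whenever `n` divides the remainder.
noncomputable def ghostInv (x : ℕ → k) (n : ℕ) : k :=
  Classical.epsilon fun b : k =>
    (n : k) * b = x n - ∑ d ∈ n.properDivisors.attach, (d : k) * ghostInv x d ^ (n / d)
decreasing_by exact (Nat.mem_properDivisors.mp d.2).2

lemma natCast_mul_ghostInv (x : ℕ → k) {n : ℕ}
    (h : (n : k) ∣ x n - ∑ d ∈ n.properDivisors, (d : k) * ghostInv x d ^ (n / d)) :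
    (n : k) * ghostInv x n = x n - ∑ d ∈ n.properDivisors, (d : k) * ghostInv x d ^ (n / d) := by
  obtain ⟨b, hb⟩ := h
  rw [ghostInv, Finset.sum_attach n.properDivisors fun d => (d : k) * ghostInv x d ^ (n / d)]
  exact Classical.epsilon_spec (p := fun b : k => (n : k) * b = _) ⟨b, hb.symm⟩

theorem eq_ghostComponent_ghostInv {S : Set ℕ} (hpos : ∀ s ∈ S, 0 < s)
    (hdvd : ∀ s ∈ S, ∀ d : ℕ, d ∣ s → 0 < d → d ∈ S)
    (φ : ∀ p : ℕ, p.Prime → k →+* k)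
    (hφ : ∀ (p : ℕ) (hp : p.Prime) (b : k), (p : k) ∣ φ p hp b - b ^ p) {x : ℕ → k}
    (hx : ∀ (p : ℕ) (hp : p.Prime), ∀ s ∈ S, p ∣ s →
      (p : k) ^ padicValNat p s ∣ x s - φ p hp (x (s / p))) :
    ∀ s ∈ S, x s = ghostComponent (ghostInv x) s := by
  intro n
  induction n using Nat.strong_induction_on with
  | _ n IH =>
    intro hn
    have hn0 := (hpos n hn).ne'
    rw [ghostComponent_eq_sum_properDivisors_add _ hn0, natCast_mul_ghostInv x ?_, add_sub_cancel]
    refine natCast_dvd_of_forall_prime_pow_dvd hn0 fun p hp hpn => ?_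
    have : Fact p.Prime := ⟨hp⟩
    have hnp_pos : 0 < n / p := Nat.div_pos (Nat.le_of_dvd (hpos n hn) hpn) hp.pos
    have hnp : x (n / p) = ghostComponent (ghostInv x) (n / p) :=
      IH _ (Nat.div_lt_self (hpos n hn) hp.one_lt) (hdvd n hn _ (Nat.div_dvd_of_dvd hpn) hnp_pos)
    have hrest : x n - ∑ d ∈ n.properDivisors, (d : k) * ghostInv x d ^ (n / d) =
        (x n - φ p hp (x (n / p)))
          - (ghostComponent (ghostInv x) n - φ p hp (ghostComponent (ghostInv x) (n / p)))
          + n * ghostInv x n := by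
      rw [hnp, ghostComponent_eq_sum_properDivisors_add _ hn0]
      ring
    rw [hrest]
    exact dvd_add (dvd_sub (hx p hp n hn hpn)
      (pow_padicValNat_dvd_ghostComponent_sub hn0 hpn (φ p hp) (hφ p hp) _))
      (dvd_mul_of_dvd_left (natCast_pow_padicValNat_dvd p n) _)

end Dwork

/-- Classical Dwork lemma for an ordinary truncation set `S ⊆ ℕ`. -/
theorem stmt4 (S : Set ℕ) (hpos : ∀ s ∈ S, 0 < s)
    (hdvd : ∀ s ∈ S, ∀ d : ℕ, d ∣ s → 0 < d → d ∈ S)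
    {k : Type*} [CommRing k]
    (φ : ∀ p : ℕ, p.Prime → k →+* k)
    (hφ : ∀ (p : ℕ) (hp : p.Prime) (a : k), φ p hp a - a ^ p ∈ Ideal.span {(p : k)})
    (x : ℕ → k) :
    (∃ a : ℕ → k, ∀ s ∈ S, x s = ∑ d ∈ s.divisors, (d : k) * a d ^ (s / d)) ↔
      ∀ (p : ℕ) (hp : p.Prime), ∀ s ∈ S, p ∣ s →
        x s - φ p hp (x (s / p)) ∈ Ideal.span {(p : k) ^ padicValNat p s} := by
  simp only [Ideal.mem_span_singleton] at hφ ⊢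
  constructor
  · rintro ⟨a, ha⟩ p hp s hs hps
    have : Fact p.Prime := ⟨hp⟩
    have hsp : s / p ∈ S := hdvd s hs _ (Nat.div_dvd_of_dvd hps)
      (Nat.div_pos (Nat.le_of_dvd (hpos s hs) hps) hp.pos)
    rw [ha s hs, ha _ hsp]
    exact Dwork.pow_padicValNat_dvd_ghostComponent_sub (hpos s hs).ne' hps (φ p hp) (hφ p hp) a
  · exact fun hx => ⟨Dwork.ghostInv x, Dwork.eq_ghostComponent_ghostInv hpos hdvd φ hφ hx⟩
end

section
/- Existence of the restriction/Frobenius map: Let f : S → T be a map of truncation posets (i.e., s₁ | s₂ implies f(s₁) | f(s₂) and |f(s₂)|/|f(s₁)| = |s₂|/|s₁|) and k a commutative ring. Then for every Witt vector (a_t) ∈ W_T(k), the vector ⟨y_s⟩ ∈ k^S defined by y_s = x_{f(s)}, where ⟨x_t⟩ = w(a_t), lies in the image of the ghost map w : W_S(k) → k^S. Consequently there is a unique natural (in k) map f* : W_T(k) → W_S(k) covering the map f*_w : k^T → k^S on ghost coordinates. -/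
/-!
Dwork's lemma: if a ring `A` carries Frobenius lifts `φ p` (that is, `p ∣ a ^ p - φ p a`),
then `y : S → A` is in the image of the ghost map as soon as `y s ≡ φ p (y s')` modulo
`p ^ v_p(|s|)` whenever `s' ≤ s` and `|s| = p |s'|`. The Witt coordinates are found by recursion
on `s`; the division by `|s|` needed at each step is possible because it is possible prime by
prime.

Over the universal ring `ℤ[a_t : t ∈ T]`, with `φ p = expand p`, the ghost vector `x` of `(a_t)`
satisfies these congruences on `T`. Since `|s|` divides `|f s|` and `f` preserves the ratio `p`,
the vector `s ↦ x (f s)` satisfies them on `S`. Evaluating its preimage at an arbitrary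
`(a_t) ∈ k^T` gives the natural map `f*`, which is unique because the ghost map is injective
over the torsion-free ring `ℤ[a_t]`.
-/
open Finset MvPolynomial

instance LocallyFiniteOrderBot.wellFoundedLT {α : Type*} [Preorder α] [LocallyFiniteOrderBot α] :
    WellFoundedLT α :=
  ⟨Subrelation.wf
    (fun {a _} hab => (ssubset_iff_of_subset (Iio_subset_Iio hab.le)).2
      ⟨a, mem_Iio.2 hab, fun h => lt_irrefl a (mem_Iio.1 h)⟩)
    (InvImage.wf Finset.Iio wellFounded_lt)⟩

theorem Nat.ordProj_dvd_of_not_dvd_div {a n p : ℕ} (hp : p.Prime) (hn : n ≠ 0)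
    (han : a ∣ n) (hanp : ¬ a ∣ n / p) : p ^ n.factorization p ∣ a := by
  obtain ⟨m, rfl⟩ := han
  have hpm : ¬ p ∣ m := by
    rintro ⟨m', rfl⟩
    exact hanp ⟨m', by rw [← mul_assoc, mul_right_comm, Nat.mul_div_cancel _ hp.pos]⟩
  rw [Nat.factorization_mul (left_ne_zero_of_mul hn) (right_ne_zero_of_mul hn), Finsupp.add_apply,
    Nat.factorization_eq_zero_of_not_dvd hpm, add_zero]
  exact Nat.ordProj_dvd a p

theorem natCast_dvd_of_forall_primeFactors {R : Type*} [CommRing R] {n : ℕ} (hn : n ≠ 0) {z : R}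
    (hz : ∀ p ∈ n.primeFactors, (p : R) ^ n.factorization p ∣ z) : (n : R) ∣ z := by
  have hprod : (n : R) = ∏ p ∈ n.primeFactors, (p : R) ^ n.factorization p := by
    conv_lhs => rw [← Nat.prod_factorization_pow_eq_self hn]
    rw [Finsupp.prod, Nat.support_factorization]
    push_cast
    rfl
  rw [hprod]
  refine prod_dvd_of_coprime (fun p hp q hq hpq => ?_) hz
  have hcop := (Nat.Coprime.pow (n.factorization p) (n.factorization q)
    ((Nat.coprime_primes (Nat.prime_of_mem_primeFactors hp)
      (Nat.prime_of_mem_primeFactors hq)).2 hpq)).cast (R := R)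
  simpa [Function.onFun] using hcop

theorem pow_factorization_succ_dvd_pow_sub_pow {R : Type*} [CommRing R] {p : ℕ} {a b : R}
    (hab : (p : R) ∣ a - b) (m : ℕ) :
    (p : R) ^ (m.factorization p + 1) ∣ a ^ m - b ^ m := by
  obtain ⟨m', hm'⟩ := Nat.ordProj_dvd m p
  calc (p : R) ^ (m.factorization p + 1)
        ∣ a ^ p ^ m.factorization p - b ^ p ^ m.factorization p := dvd_sub_pow_of_dvd_sub hab _
    _ ∣ (a ^ p ^ m.factorization p) ^ m' - (b ^ p ^ m.factorization p) ^ m' :=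
        sub_dvd_pow_sub_pow _ _ _
    _ = a ^ m - b ^ m := by rw [← pow_mul, ← pow_mul, ← hm']

theorem MvPolynomial.natCast_dvd_pow_sub_expand {σ : Type*} {p : ℕ} (hp : p.Prime)
    (q : MvPolynomial σ ℤ) : (p : MvPolynomial σ ℤ) ∣ q ^ p - expand p q := by
  have : Fact p.Prime := ⟨hp⟩
  rw [← map_natCast (C : ℤ →+* MvPolynomial σ ℤ) p, C_dvd_iff_zmod, map_sub, map_pow,
    map_expand, expand_zmod, sub_self]

namespace TP

section LocallyFinite

variable {S : Type*} [PartialOrder S] [LocallyFiniteOrderBot S] (ν : S → ℕ)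
  {A : Type*} [CommRing A]

theorem ghost_apply_eq_sum_Iic (a : S → A) (s : S) :
    ghost ν a s = ∑ t ∈ Iic s, (ν t : A) * a t ^ (ν s / ν t) := by
  rw [ghost, ← finsum_mem_coe_finset, coe_Iic]
  rfl

theorem ghost_apply_eq_add_sum_Iio {s : S} (hs : 0 < ν s) (a : S → A) :
    ghost ν a s = ν s * a s + ∑ t ∈ Iio s, (ν t : A) * a t ^ (ν s / ν t) := by
  rw [ghost_apply_eq_sum_Iic, Iic_eq_cons_Iio, sum_cons, Nat.div_self hs, pow_one]

theorem ghost_map {B : Type*} [CommRing B] (g : A →+* B) (a : S → A) :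
    ghost ν (fun t => g (a t)) = fun s => g (ghost ν a s) := by
  funext s
  simp only [ghost_apply_eq_sum_Iic, map_sum, map_mul, map_pow, map_natCast]

theorem ghost_injective [NoZeroDivisors A] [CharZero A] (hν : ∀ s, 0 < ν s) :
    Function.Injective (ghost ν : (S → A) → S → A) := by
  intro a b hab
  funext s
  induction s using WellFoundedLT.induction with
  | _ s ih =>
    have hs := congrFun hab s
    rw [ghost_apply_eq_add_sum_Iio ν (hν s), ghost_apply_eq_add_sum_Iio ν (hν s),
      sum_congr rfl fun t ht => by rw [ih t (mem_Iio.1 ht)]] at hs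
    exact mul_left_cancel₀ (Nat.cast_ne_zero.2 (hν s).ne') (add_right_cancel hs)

noncomputable def ghostLift (y : S → A) : S → A :=
  WellFoundedLT.fix fun s c => Classical.epsilon fun b : A =>
    y s - ∑ t ∈ (Iio s).attach, (ν t : A) * c t (mem_Iio.1 t.2) ^ (ν s / ν t) = ν s * b

theorem ghostLift_apply (y : S → A) (s : S) :
    ghostLift ν y s = Classical.epsilon fun b : A =>
      y s - ∑ t ∈ Iio s, (ν t : A) * ghostLift ν y t ^ (ν s / ν t) = ν s * b := by
  rw [← sum_attach (Iio s) fun t => (ν t : A) * ghostLift ν y t ^ (ν s / ν t)]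
  exact WellFoundedLT.fix_eq _ s

theorem ghost_ghostLift (hν : ∀ s, 0 < ν s) {y : S → A}
    (hy : ∀ (c : S → A) (s : S), (∀ t < s, ghost ν c t = y t) →
      (ν s : A) ∣ y s - ∑ t ∈ Iio s, (ν t : A) * c t ^ (ν s / ν t)) :
    ghost ν (ghostLift ν y) = y := by
  funext s
  induction s using WellFoundedLT.induction with
  | _ s ih =>
    have hd := hy (ghostLift ν y) s ih
    rw [ghost_apply_eq_add_sum_Iio ν (hν s), ghostLift_apply, ← Classical.epsilon_spec hd,
      sub_add_cancel]

end LocallyFinite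

section Norm

variable {S : Type*} [PartialOrder S] {ν : S → ℕ}

theorem IsTPNorm.eq_of_le_of_norm_eq (h : IsTPNorm ν) {s t t' : S} (ht : t ≤ s) (ht' : t' ≤ s)
    (he : ν t = ν t') : t = t' := by
  have hsel : ν s / (ν s / ν t) = ν t := Nat.div_div_self (h.2.1 t s ht) (h.1 s).ne'
  refine (h.2.2.2.1 s _ (Nat.div_dvd_of_dvd (h.2.1 t s ht))).unique ⟨ht, hsel.symm⟩
    ⟨ht', by rw [hsel, he]⟩

theorem IsTPNorm.finite_Iic (h : IsTPNorm ν) (s : S) : (Set.Iic s).Finite := by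
  refine Set.Finite.of_finite_image ((Set.finite_Iic (ν s)).subset ?_)
    fun t ht t' ht' => h.eq_of_le_of_norm_eq ht ht'
  rintro _ ⟨t, ht, rfl⟩
  exact Nat.le_of_dvd (h.1 s) (h.2.1 t s ht)

noncomputable abbrev IsTPNorm.locallyFiniteOrderBot (h : IsTPNorm ν) : LocallyFiniteOrderBot S :=
  letI := Classical.decEq S
  LocallyFiniteOrderBot.ofIic S (fun s => (h.finite_Iic s).toFinset) fun s t => by simp

theorem IsTPNorm.le_of_norm_dvd (h : IsTPNorm ν) {s s' t : S} (hts : t ≤ s) (hs' : s' ≤ s)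
    (hd : ν t ∣ ν s') : t ≤ s' := by
  obtain ⟨u, hus', hu⟩ := (h.2.2.2.1 s' (ν s' / ν t) (Nat.div_dvd_of_dvd hd)).exists
  rw [Nat.div_div_self hd (h.1 s').ne'] at hu
  rwa [h.eq_of_le_of_norm_eq hts (hus'.trans hs') hu.symm]

theorem IsTPNorm.exists_le_norm_eq_mul (h : IsTPNorm ν) {s : S} {p : ℕ} (hp : p ∣ ν s) :
    ∃ s' ≤ s, ν s = p * ν s' := by
  obtain ⟨s', hs', hν⟩ := (h.2.2.2.1 s p hp).exists
  exact ⟨s', hs', by rw [hν, Nat.mul_div_cancel' hp]⟩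

theorem IsTPNorm.ordProj_dvd_norm_of_not_le (h : IsTPNorm ν) {p : ℕ} (hp : p.Prime) {s s' t : S}
    (hs' : s' ≤ s) (hν : ν s = p * ν s') (hts : t ≤ s) (hts' : ¬ t ≤ s') :
    p ^ (ν s).factorization p ∣ ν t :=
  Nat.ordProj_dvd_of_not_dvd_div hp (h.1 s).ne' (h.2.1 t s hts) fun hd =>
    hts' (h.le_of_norm_dvd hts hs' (by rwa [hν, Nat.mul_div_cancel_left _ hp.pos] at hd))

variable [LocallyFiniteOrderBot S] {A : Type*} [CommRing A]

theorem IsTPNorm.pow_dvd_ghost_sub_ghost (h : IsTPNorm ν) {p : ℕ} {a b : S → A}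
    (hab : ∀ t, (p : A) ∣ a t - b t) (s : S) :
    (p : A) ^ ((ν s).factorization p + 1) ∣ ghost ν a s - ghost ν b s := by
  rw [ghost_apply_eq_sum_Iic, ghost_apply_eq_sum_Iic, ← sum_sub_distrib]
  refine dvd_sum fun t ht => ?_
  obtain ⟨m, hm⟩ := h.2.1 t s (mem_Iic.1 ht)
  have hm0 : m ≠ 0 := right_ne_zero_of_mul (hm ▸ (h.1 s).ne')
  rw [hm, Nat.mul_div_cancel_left _ (h.1 t), ← mul_sub, Nat.factorization_mul (h.1 t).ne' hm0,
    Finsupp.add_apply, add_assoc, pow_add]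
  have hνt : (p : A) ^ (ν t).factorization p ∣ (ν t : A) := by
    simpa only [Nat.cast_pow] using Nat.cast_dvd_cast (α := A) (Nat.ordProj_dvd (ν t) p)
  exact mul_dvd_mul hνt (pow_factorization_succ_dvd_pow_sub_pow (hab t) m)

theorem IsTPNorm.pow_dvd_ghost_sub_map_ghost (h : IsTPNorm ν) {p : ℕ} (hp : p.Prime)
    (φ : A →+* A) {a : S → A} (hφ : ∀ t, φ (a t) = a t ^ p) {s s' : S} (hs' : s' ≤ s)
    (hν : ν s = p * ν s') :
    (p : A) ^ (ν s).factorization p ∣ ghost ν a s - φ (ghost ν a s') := by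
  classical
  have hφghost : φ (ghost ν a s') = ∑ t ∈ Iic s', (ν t : A) * a t ^ (ν s / ν t) := by
    rw [← congrFun (ghost_map ν φ a) s', ghost_apply_eq_sum_Iic]
    refine sum_congr rfl fun t ht => ?_
    rw [hφ, ← pow_mul, hν, Nat.mul_div_assoc _ (h.2.1 t s' (mem_Iic.1 ht))]
  rw [hφghost, ghost_apply_eq_sum_Iic, ← sum_sdiff (Iic_subset_Iic.2 hs'), add_sub_cancel_right]
  refine dvd_sum fun t ht => ?_
  rw [mem_sdiff, mem_Iic, mem_Iic] at ht
  have hdvd : (p : A) ^ (ν s).factorization p ∣ (ν t : A) := by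
    simpa only [Nat.cast_pow] using
      Nat.cast_dvd_cast (α := A) (h.ordProj_dvd_norm_of_not_le hp hs' hν ht.1 ht.2)
  exact hdvd.mul_right _

theorem IsTPNorm.natCast_dvd_sub_sum_Iio (h : IsTPNorm ν) (φ : ℕ → A →+* A)
    (hφ : ∀ p : ℕ, p.Prime → ∀ a : A, (p : A) ∣ a ^ p - φ p a) {y : S → A}
    (hy : ∀ p : ℕ, p.Prime → ∀ s s', s' ≤ s → ν s = p * ν s' →
      (p : A) ^ (ν s).factorization p ∣ y s - φ p (y s'))
    {c : S → A} {s : S} (hc : ∀ t < s, ghost ν c t = y t) :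
    (ν s : A) ∣ y s - ∑ t ∈ Iio s, (ν t : A) * c t ^ (ν s / ν t) := by
  classical
  refine natCast_dvd_of_forall_primeFactors (h.1 s).ne' fun p hp => ?_
  have hp' := Nat.prime_of_mem_primeFactors hp
  obtain ⟨s', hs', hν⟩ := h.exists_le_norm_eq_mul (Nat.dvd_of_mem_primeFactors hp)
  have hs'lt : s' < s := lt_of_le_of_ne hs' fun heq => by
    subst heq
    nlinarith [hp'.two_le, h.1 s']
  have he : (ν s).factorization p = (ν s').factorization p + 1 := by
    rw [hν, Nat.factorization_mul hp'.ne_zero (h.1 s').ne', Finsupp.add_apply,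
      hp'.factorization_self, add_comm]
  -- Split the sum at `s'`: the terms with `t ≤ s'` add up to `ghost (c ^ p) s'`, which is
  -- congruent to `φ p (ghost c s') = φ p (y s')`; the others have `p ^ v_p(ν s) ∣ ν t`.
  have hfar : (p : A) ^ (ν s).factorization p ∣
      ∑ t ∈ Iio s \ Iic s', (ν t : A) * c t ^ (ν s / ν t) := by
    refine dvd_sum fun t ht => ?_
    rw [mem_sdiff, mem_Iio, mem_Iic] at ht
    have hdvd : (p : A) ^ (ν s).factorization p ∣ (ν t : A) := by
      simpa only [Nat.cast_pow] using
        Nat.cast_dvd_cast (α := A) (h.ordProj_dvd_norm_of_not_le hp' hs' hν ht.1.le ht.2)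
    exact hdvd.mul_right _
  have hnear :
      ∑ t ∈ Iic s', (ν t : A) * c t ^ (ν s / ν t) = ghost ν (fun t => c t ^ p) s' := by
    rw [ghost_apply_eq_sum_Iic]
    refine sum_congr rfl fun t ht => ?_
    rw [← pow_mul, hν, Nat.mul_div_assoc _ (h.2.1 t s' (mem_Iic.1 ht))]
  have hfrob :
      (p : A) ^ (ν s).factorization p ∣ ghost ν (fun t => c t ^ p) s' - φ p (y s') := by
    rw [← hc s' hs'lt, ← congrFun (ghost_map ν (φ p) c) s', he]
    exact h.pow_dvd_ghost_sub_ghost (fun t => hφ p hp' (c t)) s'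
  rw [← sum_sdiff fun t ht => mem_Iio.2 ((mem_Iic.1 ht).trans_lt hs'lt), hnear]
  convert ((hy p hp' s s' hs' hν).sub hfrob).sub hfar using 1
  ring

theorem IsTPNorm.exists_ghost_eq_of_frobenius_congr (h : IsTPNorm ν) (φ : ℕ → A →+* A)
    (hφ : ∀ p : ℕ, p.Prime → ∀ a : A, (p : A) ∣ a ^ p - φ p a) {y : S → A}
    (hy : ∀ p : ℕ, p.Prime → ∀ s s', s' ≤ s → ν s = p * ν s' →
      (p : A) ^ (ν s).factorization p ∣ y s - φ p (y s')) :
    ∃ b : S → A, ghost ν b = y :=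
  ⟨ghostLift ν y, ghost_ghostLift ν h.1 fun _ _ hc => h.natCast_dvd_sub_sum_Iio φ hφ hy hc⟩

end Norm

section Map

variable {S T : Type*} [PartialOrder S] [PartialOrder T] {νS : S → ℕ} {νT : T → ℕ}
  {f : S → T}

theorem IsTPMap.norm_mul_norm_eq (hS : IsTPNorm νS) (hT : IsTPNorm νT) (hf : IsTPMap νS νT f)
    {s₁ s₂ : S} (h12 : s₁ ≤ s₂) : νT (f s₂) * νS s₁ = νS s₂ * νT (f s₁) := by
  obtain ⟨hle, hratio⟩ := hf s₁ s₂ h12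
  rw [← Nat.div_mul_cancel (hT.2.1 _ _ hle), hratio, mul_right_comm,
    Nat.div_mul_cancel (hS.2.1 _ _ h12)]

theorem IsTPMap.norm_dvd_norm (hS : IsTPNorm νS) (hT : IsTPNorm νT) (hf : IsTPMap νS νT f)
    (s : S) : νS s ∣ νT (f s) := by
  obtain ⟨s₀, hs₀, hν₀⟩ := (hS.2.2.2.1 s _ dvd_rfl).exists
  rw [Nat.div_self (hS.1 s)] at hν₀
  exact ⟨νT (f s₀), by simpa [hν₀] using hf.norm_mul_norm_eq hS hT hs₀⟩

theorem IsTPMap.norm_eq_mul (hS : IsTPNorm νS) (hT : IsTPNorm νT) (hf : IsTPMap νS νT f)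
    {p : ℕ} {s s' : S} (hs' : s' ≤ s) (hν : νS s = p * νS s') : νT (f s) = p * νT (f s') :=
  Nat.eq_of_mul_eq_mul_right (hS.1 s') (by rw [hf.norm_mul_norm_eq hS hT hs', hν]; ring)

theorem IsTPMap.exists_ghost_eq_ghost_X_comp [LocallyFiniteOrderBot S] [LocallyFiniteOrderBot T]
    (hS : IsTPNorm νS) (hT : IsTPNorm νT) (hf : IsTPMap νS νT f) :
    ∃ b : S → MvPolynomial T ℤ, ghost νS b = fun s => ghost νT X (f s) := by
  refine hS.exists_ghost_eq_of_frobenius_congr (fun p => (expand p).toRingHom)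
    ?_ fun p hp s s' hs' hν => ?_
  · intro p hp q
    exact natCast_dvd_pow_sub_expand hp q
  have hfac : (νS s).factorization p ≤ (νT (f s)).factorization p :=
    (Nat.factorization_le_iff_dvd (hS.1 s).ne' (hT.1 _).ne').2 (hf.norm_dvd_norm hS hT s) p
  have hcongr := hT.pow_dvd_ghost_sub_map_ghost (A := MvPolynomial T ℤ) hp
    (expand p).toRingHom (expand_X p) (hf s' s hs').1 (hf.norm_eq_mul hS hT hs' hν)
  exact (pow_dvd_pow _ hfac).trans hcongr

end Map

end TP

/-- Existence and uniqueness of the restriction/Frobenius map `f*` induced by a map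
of truncation posets `f : S → T`: on ghost coordinates it is `⟨x_t⟩ ↦ ⟨x_{f s}⟩`,
it lifts to Witt coordinates, and the lift is unique among maps natural in `k`. -/
theorem stmt5 {S T : Type} [PartialOrder S] [PartialOrder T]
    (νS : S → ℕ) (νT : T → ℕ) (hS : TP.IsTPNorm νS) (hT : TP.IsTPNorm νT)
    (f : S → T) (hf : TP.IsTPMap νS νT f) :
    (∀ (k : Type) [CommRing k], ∀ a : T → k,
        ∃ b : S → k, TP.ghost νS b = fun s => TP.ghost νT a (f s)) ∧
    ∃! F : ∀ (k : Type) [CommRing k], (T → k) → (S → k),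
      (∀ (k : Type) [CommRing k], ∀ a : T → k,
        TP.ghost νS (F k a) = fun s => TP.ghost νT a (f s)) ∧
      (∀ (k₁ k₂ : Type) [CommRing k₁] [CommRing k₂], ∀ (g : k₁ →+* k₂) (a : T → k₁),
        F k₂ (fun t => g (a t)) = fun s => g (F k₁ a s)) := by
  let := hS.locallyFiniteOrderBot
  let := hT.locallyFiniteOrderBot
  obtain ⟨b, hb⟩ := hf.exists_ghost_eq_ghost_X_comp hS hT
  have hF_ghost : ∀ (k : Type) [CommRing k], ∀ a : T → k,
      TP.ghost νS (fun s => aeval a (b s)) = fun s => TP.ghost νT a (f s) := by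
    intro k _ a
    have hS_map := TP.ghost_map νS (aeval (R := ℤ) a).toRingHom b
    have hT_map := TP.ghost_map νT (aeval (R := ℤ) a).toRingHom X
    simp only [AlgHom.toRingHom_eq_coe, RingHom.coe_coe, aeval_X] at hS_map hT_map
    rw [hS_map, hb, hT_map]
  have hF_natural : ∀ (k₁ k₂ : Type) [CommRing k₁] [CommRing k₂] (g : k₁ →+* k₂)
      (a : T → k₁), (fun s => aeval (fun t => g (a t)) (b s)) = fun s => g (aeval a (b s)) :=
    fun _ _ _ _ g a => funext fun s =>
      (DFunLike.congr_fun (comp_aeval (R := ℤ) (f := a) g.toIntAlgHom) (b s)).symm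
  refine ⟨fun k _ a => ⟨_, hF_ghost k a⟩, fun k _ a s => aeval a (b s),
    ⟨hF_ghost, hF_natural⟩, ?_⟩
  rintro F ⟨hF_ghost', hF_natural'⟩
  have hF_X : F (MvPolynomial T ℤ) X = b :=
    TP.ghost_injective νS hS.1 (by rw [hF_ghost', hb])
  funext k _ a s
  simpa [hF_X] using congrFun (hF_natural' _ k (aeval (R := ℤ) a).toRingHom X) s
end

section
/- Decomposition of T-maps: Let f : S → T be a T-map of truncation posets. Decompose S = ⊔_i S_i and T = ⊔_j T_j into connected components, each isomorphic via |−| to an ordinary truncation set. Then f restricts to maps f_i : S_i → T_{j(i)}, and each f_i corresponds, under isomorphisms of S_i with an ordinary truncation set U and T_{j(i)} with an ordinary truncation set V, to the multiplication-by-n map V/n → V, where n is the image of the element of norm 1 and V/n = { t ∈ ℕ : nt ∈ V }. -/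
/-!
On the component of a norm-one element `i`, preservation of norm ratios gives
`|f s| = |f i| * |s|`; since two elements above `i` with equal norm coincide, `f` is injective
there. Conversely, inside one component `u ≤ t` holds exactly when `|u|` divides `|t|`, so an
element `t` of the component of `f i` with `|f i| ∣ |t|` lies above `f i`, and the fibration
property lifts it to an element above `i`.
-/

namespace TP

section Norm

variable {S : Type*} [PartialOrder S] {ν : S → ℕ}

theorem IsTPNorm.pos_s6 (h : IsTPNorm ν) (s : S) : 0 < ν s :=
  h.1 s

theorem IsTPNorm.dvd_of_le_s6 (h : IsTPNorm ν) {s t : S} (hst : s ≤ t) : ν s ∣ ν t :=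
  h.2.1 s t hst

theorem IsTPNorm.eq_of_le_of_le_of_norm_eq_s6 (h : IsTPNorm ν) {s t t' : S} (ht : s ≤ t)
    (ht' : s ≤ t') (hν : ν t = ν t') : t = t' :=
  h.2.2.2.2 s t t' ht ht' hν

theorem IsTPNorm.exists_le_norm_eq_s6 (h : IsTPNorm ν) {t : S} {d : ℕ} (hd : d ∣ ν t) :
    ∃ u ≤ t, ν u = d := by
  obtain ⟨m, hm⟩ := hd
  have hm_pos : 0 < m := Nat.pos_of_ne_zero fun hm0 => (h.pos_s6 t).ne' (by rw [hm, hm0, mul_zero])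
  obtain ⟨u, ⟨hut, hu⟩, -⟩ := h.2.2.2.1 t m (Dvd.intro_left d hm.symm)
  exact ⟨u, hut, by rw [hu, hm, Nat.mul_div_cancel _ hm_pos]⟩

theorem IsTPNorm.eq_of_norm_eq_one_of_le (h : IsTPNorm ν) {j j' t : S} (hj : ν j = 1)
    (hj' : ν j' = 1) (hjt : j ≤ t) (hj't : j' ≤ t) : j = j' :=
  (h.2.2.2.1 t (ν t) dvd_rfl).unique ⟨hjt, by rw [hj, Nat.div_self (h.pos_s6 t)]⟩
    ⟨hj't, by rw [hj', Nat.div_self (h.pos_s6 t)]⟩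

theorem SameComp.symm {s t : S} : SameComp ν s t → SameComp ν t s :=
  fun ⟨i, hi, his, hit⟩ => ⟨i, hi, hit, his⟩

theorem IsTPNorm.le_iff_dvd_of_sameComp (h : IsTPNorm ν) {s t : S} (hst : SameComp ν s t) :
    s ≤ t ↔ ν s ∣ ν t := by
  refine ⟨h.dvd_of_le_s6, fun hd => ?_⟩
  obtain ⟨j, hj, hjs, hjt⟩ := hst
  obtain ⟨u, hut, hu⟩ := h.exists_le_norm_eq_s6 hd
  obtain ⟨j', hj'u, hj'⟩ := h.exists_le_norm_eq_s6 (one_dvd (ν u))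
  obtain rfl : j' = j := h.eq_of_norm_eq_one_of_le hj' hj (hj'u.trans hut) hjt
  exact h.eq_of_le_of_le_of_norm_eq_s6 hj'u hjs hu ▸ hut

end Norm

section Map

variable {S T : Type*} [PartialOrder S] [PartialOrder T] {νS : S → ℕ} {νT : T → ℕ} {f : S → T}

theorem IsTPMap.norm_map_eq_mul (hT : IsTPNorm νT) (hf : IsTPMap νS νT f) {i s : S}
    (hi : νS i = 1) (his : i ≤ s) : νT (f s) = νT (f i) * νS s := by
  obtain ⟨hle, hratio⟩ := hf i s his
  rw [hi, Nat.div_one] at hratio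
  rw [← hratio, Nat.mul_div_cancel' (hT.dvd_of_le_s6 hle)]

theorem IsTPMap.injOn_Ici (hS : IsTPNorm νS) (hT : IsTPNorm νT) (hf : IsTPMap νS νT f)
    {i : S} (hi : νS i = 1) : Set.InjOn f (Set.Ici i) := by
  intro s hs s' hs' hss'
  have hν := hf.norm_map_eq_mul hT hi hs
  rw [hss', hf.norm_map_eq_mul hT hi hs'] at hν
  exact (hS.eq_of_le_of_le_of_norm_eq_s6 hs' hs (Nat.eq_of_mul_eq_mul_left (hT.pos_s6 _) hν)).symm

theorem IsTPMap.exists_le_map_eq_iff_dvd (hT : IsTPNorm νT) (hf : IsTPMap νS νT f)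
    (hfib : IsFibration f) {i : S} (hi : νS i = 1) {t : T} (ht : SameComp νT t (f i)) :
    (∃ s, i ≤ s ∧ f s = t) ↔ νT (f i) ∣ νT t := by
  constructor
  · rintro ⟨s, his, rfl⟩
    exact Dvd.intro _ (hf.norm_map_eq_mul hT hi his).symm
  · intro hdvd
    exact hfib i t ((hT.le_iff_dvd_of_sameComp ht.symm).2 hdvd)

end Map

end TP

/-- Decomposition of T-maps: a T-map `f : S → T` sends the connected component of a
norm-1 element `i` to the component of `f i`, multiplying norms by `n = |f i|`,
injectively, with image exactly the elements of that component whose norm is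
divisible by `n`; i.e. each restriction is isomorphic to `V/n → V`, multiplication
by `n`. -/
theorem stmt6 {S T : Type*} [PartialOrder S] [PartialOrder T]
    (νS : S → ℕ) (νT : T → ℕ) (hS : TP.IsTPNorm νS) (hT : TP.IsTPNorm νT)
    (f : S → T) (hf : TP.IsTMap νS νT f) :
    ∀ i : S, νS i = 1 → ∀ n : ℕ, n = νT (f i) →
      (∀ s : S, i ≤ s → νT (f s) = n * νS s) ∧
      Set.InjOn f {s : S | i ≤ s} ∧
      (∀ t : T, TP.SameComp νT t (f i) → ((∃ s : S, i ≤ s ∧ f s = t) ↔ n ∣ νT t)) := by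
  rintro i hi n rfl
  obtain ⟨hmap, hfib, -⟩ := hf
  exact ⟨fun _ => hmap.norm_map_eq_mul hT hi, hmap.injOn_Ici hS hT hi,
    fun _ => hmap.exists_le_map_eq_iff_dvd hT hfib hi⟩
end

section
/- Every N-map is a T-map: if f : S → T is a map of truncation posets such that for every s ∈ S and t' in the same connected component as f(s) there exists s' in the same connected component as s with t' | f(s'), then f is a fibration, i.e., for every s ∈ S and t' ∈ T with f(s) | t' there exists s' ∈ S with s | s' and f(s') = t'. -/
/-!
The N-map condition applied to `f s ≤ t'` yields `s'` in the component of `s`, over the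
norm-one element `i`, with `t' ≤ f s'`. On that component `f` multiplies norms by
`c = |f i|`, so `|t'| = c m` with `|s| ∣ m ∣ |s'|`. The element of norm `m` below `s'` then
maps to `t'`, and it lies above `s` because within a component the order is divisibility
of norms.
-/

namespace TP

section Norm

variable {S : Type*} [PartialOrder S] {ν : S → ℕ}

theorem IsTPNorm.exists_le_norm_eq_s7 (hν : IsTPNorm ν) {s : S} {m : ℕ} (hm : m ∣ ν s) :
    ∃ t, t ≤ s ∧ ν t = m := by
  obtain ⟨t, ⟨hts, ht⟩, -⟩ := hν.2.2.2.1 s (ν s / m) (Nat.div_dvd_of_dvd hm)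
  exact ⟨t, hts, by rw [ht, Nat.div_div_self hm (hν.1 s).ne']⟩

theorem IsTPNorm.eq_of_norm_eq_one (hν : IsTPNorm ν) {s a b : S} (has : a ≤ s) (hbs : b ≤ s)
    (ha : ν a = 1) (hb : ν b = 1) : a = b := by
  have hdiv : ν s / ν s = 1 := Nat.div_self (hν.1 s)
  obtain ⟨r, -, hr⟩ := hν.2.2.2.1 s (ν s) dvd_rfl
  exact (hr a ⟨has, by rw [ha, hdiv]⟩).trans (hr b ⟨hbs, by rw [hb, hdiv]⟩).symm

theorem IsTPNorm.le_of_le_of_norm_eq_one (hν : IsTPNorm ν) {i s x : S} (hi : ν i = 1)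
    (his : i ≤ s) (hxs : x ≤ s) : i ≤ x := by
  obtain ⟨j, hjx, hj⟩ := hν.exists_le_norm_eq_s7 (one_dvd (ν x))
  rwa [hν.eq_of_norm_eq_one his (hjx.trans hxs) hi hj]

theorem IsTPNorm.le_of_dvd (hν : IsTPNorm ν) {i s t : S} (hi : ν i = 1) (his : i ≤ s)
    (hit : i ≤ t) (hst : ν s ∣ ν t) : s ≤ t := by
  obtain ⟨u, hut, hu⟩ := hν.exists_le_norm_eq_s7 hst
  have hiu : i ≤ u := hν.le_of_le_of_norm_eq_one hi hit hut
  rwa [← hν.2.2.2.2 i u s hiu his hu]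

end Norm

theorem IsTPMap.norm_apply_eq_mul {S T : Type*} [PartialOrder S] [PartialOrder T]
    {νS : S → ℕ} {νT : T → ℕ} {f : S → T} (hT : IsTPNorm νT) (hf : IsTPMap νS νT f)
    {i x : S} (hi : νS i = 1) (hix : i ≤ x) : νT (f x) = νT (f i) * νS x := by
  obtain ⟨hle, hratio⟩ := hf i x hix
  rw [← Nat.mul_div_cancel' (hT.2.1 _ _ hle), hratio, hi, Nat.div_one]

end TP

/-- Every N-map is a fibration (hence a T-map up to finiteness): if `f` satisfies the
strong fibration condition of N-maps, then for all `s` and `t'` with `f s ≤ t'` there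
is `s'` with `s ≤ s'` and `f s' = t'`. -/
theorem stmt7 {S T : Type*} [PartialOrder S] [PartialOrder T]
    (νS : S → ℕ) (νT : T → ℕ) (hS : TP.IsTPNorm νS) (hT : TP.IsTPNorm νT)
    (f : S → T) (hf : TP.IsTPMap νS νT f)
    (hstrong : ∀ (s : S) (t' : T), TP.SameComp νT (f s) t' →
      ∃ s' : S, TP.SameComp νS s s' ∧ t' ≤ f s') :
    TP.IsFibration f := by
  intro s t' hst'
  obtain ⟨w, hws, hw⟩ := hT.exists_le_norm_eq_s7 (one_dvd (νT (f s)))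
  obtain ⟨s', ⟨i, hi, his, his'⟩, ht's'⟩ := hstrong s t' ⟨w, hw, hws, hws.trans hst'⟩
  have hfi : f i ≤ t' := (hf i s his).1.trans hst'
  have hc : 0 < νT (f i) := hT.1 (f i)
  obtain ⟨m, hm⟩ := hT.2.1 _ _ hfi
  have hsm : νS s ∣ m := by
    have := hT.2.1 _ _ hst'
    rwa [hm, hf.norm_apply_eq_mul hT hi his, Nat.mul_dvd_mul_iff_left hc] at this
  have hms' : m ∣ νS s' := by
    have := hT.2.1 _ _ ht's'
    rwa [hm, hf.norm_apply_eq_mul hT hi his', Nat.mul_dvd_mul_iff_left hc] at this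
  obtain ⟨s'', hs''s', hs''⟩ := hS.exists_le_norm_eq_s7 hms'
  have his'' : i ≤ s'' := hS.le_of_le_of_norm_eq_one hi his' hs''s'
  refine ⟨s'', hS.le_of_dvd hi his his'' (hs'' ▸ hsm), ?_⟩
  refine hT.2.2.2.2 (f i) _ _ (hf i s'' his'').1 hfi ?_
  rw [hf.norm_apply_eq_mul hT hi his'', hs'', hm]
end

section
/- Additive-pullback commutation on ghost coordinates: Let f : S → A be a T-map and g : T → A an R-map of truncation posets. Define f*_⊕T = { (s, t, ξ) : f(s) = g(t), ξ ∈ C_m } where m = gcd(|f(s)|/|s|, |g(t)|/|t|) and C_m is a cyclic group of order m, with norm |(s,t,ξ)| = gcd(|s|,|t|). Then for any commutative ring k and any ⟨x_s⟩ ∈ k^S, the t-th coordinate of the composite g*_w ∘ f^w_⊕ applied to ⟨x_s⟩, namely Σ_{s : f(s) = g(t)} (|g(t)|/|s|)·x_s, equals Σ_{(s,t,ξ) ∈ f*_⊕T} (|t|/gcd(|s|,|t|))·x_s (sum over triples with second coordinate t). In particular, for each s with f(s) = g(t), we have |g(t)|/|s| = (|t|/gcd(|s|,|t|))·gcd(|f(s)|/|s|,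 |g(t)|/|t|). -/
theorem Nat.div_eq_div_gcd_mul_gcd_div {a b c : ℕ} (hac : a ∣ c) (hbc : b ∣ c) :
    c / a = b / a.gcd b * (c / a).gcd (c / b) := by
  rcases Nat.eq_zero_or_pos a with rfl | ha
  · simp [Nat.eq_zero_of_zero_dvd hac]
  rcases Nat.eq_zero_or_pos b with rfl | hb
  · simp [Nat.eq_zero_of_zero_dvd hbc]
  -- with `c = lcm(a,b)·e`, the quotients `c/a` and `c/b` are `e` times coprime cofactors
  obtain ⟨e, rfl⟩ := Nat.lcm_dvd hac hbc
  have hca : a.lcm b * e / a = b / a.gcd b * e := by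
    rw [Nat.lcm_eq_mul_div, Nat.mul_div_assoc a (Nat.gcd_dvd_right a b), mul_assoc,
      Nat.mul_div_cancel_left _ ha]
  have hcb : a.lcm b * e / b = a / a.gcd b * e := by
    rw [Nat.lcm_comm, Nat.lcm_eq_mul_div, Nat.gcd_comm b a,
      Nat.mul_div_assoc b (Nat.gcd_dvd_left a b), mul_assoc, Nat.mul_div_cancel_left _ hb]
  have hcop : (b / a.gcd b).gcd (a / a.gcd b) = 1 :=
    (Nat.coprime_div_gcd_div_gcd (Nat.gcd_pos_of_pos_left b ha)).symm
  rw [hca, hcb, Nat.gcd_mul_right, hcop, one_mul]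

theorem finsum_mem_sigma_fst_preimage {ι M : Type*} {β : ι → Type*} [AddCommMonoid M]
    [∀ i, Finite (β i)] {s : Set ι} (hs : s.Finite) (g : ι → M) :
    ∑ᶠ p ∈ (Sigma.fst : (Σ i, β i) → ι) ⁻¹' s, g p.1 = ∑ᶠ i ∈ s, Nat.card (β i) • g i := by
  classical
  have := fun i => Fintype.ofFinite (β i)
  lift s to Finset ι using hs
  have hpre : (Sigma.fst : (Σ i, β i) → ι) ⁻¹' s =
      ↑(s.sigma fun i => (Finset.univ : Finset (β i))) := by
    ext; simp
  rw [hpre, finsum_mem_coe_finset, finsum_mem_coe_finset, Finset.sum_sigma]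
  simp [Nat.card_eq_fintype_card]

namespace TP

variable {S A : Type*} [PartialOrder S] [PartialOrder A] {νS : S → ℕ} {νA : A → ℕ}

theorem IsTPNorm.exists_le_norm_eq_one (hS : IsTPNorm νS) (s : S) : ∃ u ≤ s, νS u = 1 := by
  obtain ⟨u, ⟨hus, hu⟩, -⟩ := hS.2.2.2.1 s (νS s) dvd_rfl
  exact ⟨u, hus, hu.trans (Nat.div_self (hS.1 s))⟩

theorem IsTPMap.norm_dvd_norm_apply {f : S → A} (hf : IsTPMap νS νA f) (hS : IsTPNorm νS)
    (hA : IsTPNorm νA) (s : S) : νS s ∣ νA (f s) := by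
  obtain ⟨u, hus, hu⟩ := hS.exists_le_norm_eq_one s
  obtain ⟨hfus, hratio⟩ := hf u s hus
  rw [hu, Nat.div_one] at hratio
  exact hratio ▸ Nat.div_dvd_of_dvd (hA.2.1 _ _ hfus)

end TP

/-- Additive-pullback commutation on ghost coordinates: for a T-map `f : S → A` and an
R-map `g : T → A`, the `t`-coordinate of `g* ∘ f_⊕` on ghost coordinates equals the sum
over the additive pullback `f*_⊕T = {(s,ξ) | f s = g t, ξ ∈ C_m}` of the coefficients
`|t|/gcd(|s|,|t|)`, where `m = gcd(|f s|/|s|, |g t|/|t|)`; in particular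
`|g t|/|s| = (|t|/gcd(|s|,|t|))·gcd(|f s|/|s|, |g t|/|t|)`. -/
theorem stmt13 {S T A : Type*} [PartialOrder S] [PartialOrder T] [PartialOrder A]
    (νS : S → ℕ) (νT : T → ℕ) (νA : A → ℕ)
    (hS : TP.IsTPNorm νS) (hT : TP.IsTPNorm νT) (hA : TP.IsTPNorm νA)
    (f : S → A) (g : T → A) (hf : TP.IsTMap νS νA f) (hg : TP.IsTPMap νT νA g)
    {k : Type*} [CommRing k] (x : S → k) (t : T) :
    (∀ s : S, f s = g t →
      νA (g t) / νS s
        = (νT t / Nat.gcd (νS s) (νT t)) * Nat.gcd (νA (f s) / νS s) (νA (g t) / νT t)) ∧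
    (∑ᶠ s ∈ {s : S | f s = g t}, ((νA (g t) / νS s : ℕ) : k) * x s)
      = ∑ᶠ p ∈ {p : Σ s : S, ZMod (Nat.gcd (νA (f s) / νS s) (νA (g t) / νT t)) |
            f p.1 = g t},
          ((νT t / Nat.gcd (νS p.1) (νT t) : ℕ) : k) * x p.1 := by
  have hdvd_t : νT t ∣ νA (g t) := hg.norm_dvd_norm_apply hT hA t
  have hcoeff : ∀ s : S, f s = g t →
      νA (g t) / νS s
        = (νT t / Nat.gcd (νS s) (νT t)) * Nat.gcd (νA (f s) / νS s) (νA (g t) / νT t) := by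
    intro s hs
    rw [hs]
    exact Nat.div_eq_div_gcd_mul_gcd_div (hs ▸ hf.1.norm_dvd_norm_apply hS hA s) hdvd_t
  refine ⟨hcoeff, ?_⟩
  have : ∀ s : S, NeZero (Nat.gcd (νA (f s) / νS s) (νA (g t) / νT t)) := fun s =>
    ⟨Nat.gcd_ne_zero_left <| (Nat.div_ne_zero_iff_of_dvd (hf.1.norm_dvd_norm_apply hS hA s)).2
      ⟨(hA.1 _).ne', (hS.1 s).ne'⟩⟩
  calc (∑ᶠ s ∈ {s : S | f s = g t}, ((νA (g t) / νS s : ℕ) : k) * x s)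
      = ∑ᶠ s ∈ {s : S | f s = g t}, Nat.card (ZMod (Nat.gcd (νA (f s) / νS s) (νA (g t) / νT t)))
          • (((νT t / Nat.gcd (νS s) (νT t) : ℕ) : k) * x s) := by
        refine finsum_mem_congr rfl fun s hs => ?_
        rw [Nat.card_zmod, nsmul_eq_mul, hcoeff s hs]
        push_cast
        ring
    _ = _ := (finsum_mem_sigma_fst_preimage
          (β := fun s => ZMod (Nat.gcd (νA (f s) / νS s) (νA (g t) / νT t))) (hf.2.2 (g t)) _).symm
end
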